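/- Let n ≥ 1, let A be an IFM of order n, let λ ∈ [0,1) and let p > 0 be a real number. If r, s, j are indices and Lr, Ls, Mr, Ms are reals with (A^m)μ r j → Lr, (A^m)μ s j → Ls, (A^m)ν r j → Mr, (A^m)ν s j → Ms as m → ∞ (powers taken with the maxgeneralized mean–mingeneralized mean operation), then Lr = Ls and Mr = Ms; that is, in the limit matrix all entries of each column are identical. -/

import Mathlib

open Filter Topology

/-- `A` (given by membership part `Amu` and non-membership part `Anu`) is an
intuitionistic fuzzy matrix. -/
def IsIFM (n : ℕ) (Amu Anu : Fin n → Fin n → ℝ) : Prop :=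
  ∀ i j, 0 ≤ Amu i j ∧ 0 ≤ Anu i j ∧ Amu i j + Anu i j ≤ 1

/-- Powers of an IFM under the maxgeneralized mean–mingeneralized mean operation
with parameters `lam` and exponent `p`:
`A^1 = A` and `A^(k+1) = A^k ∘ A`, where
`(X ∘ A)μ i j = max_t (lam·(Xμ i t)^p + (1-lam)·(Aμ t j)^p)^(1/p)` and
`(X ∘ A)ν i j = min_t (lam·(Xν i t)^p + (1-lam)·(Aν t j)^p)^(1/p)`.
(The value at `0` is irrelevant; it is set to `A`.) -/
noncomputable def gmPow (n : ℕ) (lam p : ℝ) (Amu Anu : Fin n → Fin n → ℝ) :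
    ℕ → (Fin n → Fin n → ℝ) × (Fin n → Fin n → ℝ)
  | 0 => (Amu, Anu)
  | 1 => (Amu, Anu)
  | m + 2 =>
    let X := gmPow n lam p Amu Anu (m + 1)
    (fun i j => ⨆ t : Fin n, (lam * X.1 i t ^ p + (1 - lam) * Amu t j ^ p) ^ (1 / p),
     fun i j => ⨅ t : Fin n, (lam * X.2 i t ^ p + (1 - lam) * Anu t j ^ p) ^ (1 / p))
/-!
Raising entries to the `p`-th power linearises the product: writing `u = (A^m)μ ^ p`
entrywise, the `p`-th powers of the next power are `max_t (λ u i t + (1 - λ) (Aμ t j) ^ p)`.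
The second summand does not depend on the row `i`, and `max` is `1`-Lipschitz for the sup
norm, so the sup-distance between rows `r` and `s` of `(A^m)μ ^ p` shrinks by a factor `λ < 1`
at every step. Hence `Lr ^ p = Ls ^ p`, and `Lr = Ls` since both are nonnegative; the same
argument with `min` handles the `ν` part.
-/

section Finite

variable {ι : Type*}

theorem MonotoneOn.map_ciSup_of_finite [Finite ι] [Nonempty ι] {α β : Type*}
    [ConditionallyCompleteLinearOrder α] [ConditionallyCompleteLinearOrder β] {s : Set α}
    {φ : α → β} (hφ : MonotoneOn φ s) {f : ι → α} (hf : ∀ i, f i ∈ s) :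
    φ (⨆ i, f i) = ⨆ i, φ (f i) := by
  obtain ⟨i₀, hi₀⟩ := exists_eq_ciSup_of_finite (f := f)
  rw [← hi₀]
  refine le_antisymm (le_ciSup (Finite.bddAbove_range fun i => φ (f i)) i₀) (ciSup_le fun i => ?_)
  exact hφ (hf i) (hf i₀) (hi₀ ▸ le_ciSup (Finite.bddAbove_range f) i)

theorem MonotoneOn.map_ciInf_of_finite [Finite ι] [Nonempty ι] {α β : Type*}
    [ConditionallyCompleteLinearOrder α] [ConditionallyCompleteLinearOrder β] {s : Set α}
    {φ : α → β} (hφ : MonotoneOn φ s) {f : ι → α} (hf : ∀ i, f i ∈ s) :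
    φ (⨅ i, f i) = ⨅ i, φ (f i) :=
  MonotoneOn.map_ciSup_of_finite (α := αᵒᵈ) (β := βᵒᵈ) hφ.dual hf

theorem rpow_ciSup_rpow_one_div [Finite ι] [Nonempty ι] {g : ι → ℝ} (hg : ∀ i, 0 ≤ g i)
    {p : ℝ} (hp : 0 < p) : (⨆ i, g i ^ (1 / p)) ^ p = ⨆ i, g i := by
  rw [(Real.monotoneOn_rpow_Ici_of_exponent_nonneg hp.le).map_ciSup_of_finite
    fun i => Real.rpow_nonneg (hg i) _]
  simp_rw [one_div, Real.rpow_inv_rpow (hg _) hp.ne']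

theorem rpow_ciInf_rpow_one_div [Finite ι] [Nonempty ι] {g : ι → ℝ} (hg : ∀ i, 0 ≤ g i)
    {p : ℝ} (hp : 0 < p) : (⨅ i, g i ^ (1 / p)) ^ p = ⨅ i, g i := by
  rw [(Real.monotoneOn_rpow_Ici_of_exponent_nonneg hp.le).map_ciInf_of_finite
    fun i => Real.rpow_nonneg (hg i) _]
  simp_rw [one_div, Real.rpow_inv_rpow (hg _) hp.ne']

variable [Fintype ι]

theorem lipschitzWith_one_ciSup [Nonempty ι] : LipschitzWith 1 fun x : ι → ℝ => ⨆ i, x i :=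
  LipschitzWith.of_le_add fun x y => ciSup_le fun i =>
    calc x i ≤ y i + dist (x i) (y i) := by
          rw [Real.dist_eq]; linarith [le_abs_self (x i - y i)]
      _ ≤ (⨆ i, y i) + dist x y :=
          add_le_add (le_ciSup (Finite.bddAbove_range y) i) (dist_le_pi_dist x y i)

theorem lipschitzWith_one_ciInf [Nonempty ι] : LipschitzWith 1 fun x : ι → ℝ => ⨅ i, x i := by
  refine LipschitzWith.of_le_add fun x y => sub_le_iff_le_add.1 (le_ciInf fun i => ?_)
  calc (⨅ i, x i) - dist x y ≤ x i - dist (x i) (y i) :=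
        sub_le_sub (ciInf_le (Finite.bddBelow_range x) i) (dist_le_pi_dist x y i)
    _ ≤ y i := by rw [Real.dist_eq]; linarith [le_abs_self (x i - y i)]

theorem dist_lipschitz_smul_add_le {κ : Type*} [Fintype κ] {F : κ → (ι → ℝ) → ℝ}
    (hF : ∀ k, LipschitzWith 1 (F k)) (lam : ℝ) (c : κ → ι → ℝ) (x y : ι → ℝ) :
    dist (fun k => F k (lam • x + c k)) (fun k => F k (lam • y + c k)) ≤ |lam| * dist x y :=
  (dist_pi_le_iff (by positivity)).2 fun k =>
    calc dist (F k (lam • x + c k)) (F k (lam • y + c k))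
        ≤ dist (lam • x + c k) (lam • y + c k) := by
          simpa using (hF k).dist_le_mul (lam • x + c k) (lam • y + c k)
      _ = |lam| * dist x y := by rw [dist_add_right, dist_smul₀, Real.norm_eq_abs]

end Finite

theorem tendsto_zero_of_succ_le_mul {d : ℕ → ℝ} {c : ℝ} (hd : ∀ m, 0 ≤ d m) (hc0 : 0 ≤ c)
    (hc1 : c < 1) (h : ∀ m, d (m + 1) ≤ c * d m) : Tendsto d atTop (𝓝 0) :=
  squeeze_zero hd (fun m => le_geom hc0 m fun k _ => h k) <| by
    simpa using (tendsto_pow_atTop_nhds_zero_of_lt_one hc0 hc1).mul_const (d 0)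

theorem tendsto_dist_apply_of_dist_succ_le {ι : Type*} [Fintype ι] {x y : ℕ → ι → ℝ} {c : ℝ}
    (hc0 : 0 ≤ c) (hc1 : c < 1) (h : ∀ m, dist (x (m + 1)) (y (m + 1)) ≤ c * dist (x m) (y m))
    (j : ι) : Tendsto (fun m => dist (x m j) (y m j)) atTop (𝓝 0) :=
  squeeze_zero (fun _ => dist_nonneg) (fun m => dist_le_pi_dist (x m) (y m) j)
    (tendsto_zero_of_succ_le_mul (fun _ => dist_nonneg) hc0 hc1 h)

theorem eq_of_tendsto_dist_rpow {α : Type*} {l : Filter α} [l.NeBot] {x y : α → ℝ} {L L' p : ℝ}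
    (hp : 0 < p) (hx0 : ∀ a, 0 ≤ x a) (hy0 : ∀ a, 0 ≤ y a) (hx : Tendsto x l (𝓝 L))
    (hy : Tendsto y l (𝓝 L')) (h : Tendsto (fun a => dist (x a ^ p) (y a ^ p)) l (𝓝 0)) :
    L = L' := by
  have hdist : dist (L ^ p) (L' ^ p) = 0 :=
    tendsto_nhds_unique ((hx.rpow_const (Or.inr hp.le)).dist (hy.rpow_const (Or.inr hp.le))) h
  exact (Real.rpow_left_inj (ge_of_tendsto' hx hx0) (ge_of_tendsto' hy hy0) hp.ne').1
    (dist_eq_zero.1 hdist)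

section IFM

variable {n : ℕ} {lam p : ℝ} {Amu Anu : Fin n → Fin n → ℝ}

theorem weighted_rpow_add_nonneg (hlam : lam ∈ Set.Icc (0 : ℝ) 1) {x y : ℝ} (hx : 0 ≤ x)
    (hy : 0 ≤ y) : 0 ≤ lam * x ^ p + (1 - lam) * y ^ p :=
  add_nonneg (mul_nonneg hlam.1 (Real.rpow_nonneg hx p))
    (mul_nonneg (sub_nonneg.2 hlam.2) (Real.rpow_nonneg hy p))

theorem gmPow_nonneg (hA : IsIFM n Amu Anu) (hlam : lam ∈ Set.Icc (0 : ℝ) 1) (m : ℕ)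
    (i j : Fin n) :
    0 ≤ (gmPow n lam p Amu Anu m).1 i j ∧ 0 ≤ (gmPow n lam p Amu Anu m).2 i j := by
  induction m using Nat.twoStepInduction generalizing i j with
  | zero | one => exact ⟨(hA i j).1, (hA i j).2.1⟩
  | more m _ ih =>
    exact ⟨Real.iSup_nonneg fun t => Real.rpow_nonneg
        (weighted_rpow_add_nonneg hlam (ih i t).1 (hA t j).1) _,
      Real.iInf_nonneg fun t => Real.rpow_nonneg
        (weighted_rpow_add_nonneg hlam (ih i t).2 (hA t j).2.1) _⟩

theorem gmPow_fst_rpow_succ_succ (hA : IsIFM n Amu Anu) (hlam : lam ∈ Set.Icc (0 : ℝ) 1)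
    (hp : 0 < p) (m : ℕ) (i : Fin n) :
    (fun j => (gmPow n lam p Amu Anu (m + 2)).1 i j ^ p) = fun j =>
      ⨆ t, (lam • (fun t => (gmPow n lam p Amu Anu (m + 1)).1 i t ^ p) +
        fun t => (1 - lam) * Amu t j ^ p) t := by
  have : Nonempty (Fin n) := ⟨i⟩
  funext j
  exact rpow_ciSup_rpow_one_div
    (fun t => weighted_rpow_add_nonneg hlam (gmPow_nonneg hA hlam (m + 1) i t).1 (hA t j).1) hp

theorem gmPow_snd_rpow_succ_succ (hA : IsIFM n Amu Anu) (hlam : lam ∈ Set.Icc (0 : ℝ) 1)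
    (hp : 0 < p) (m : ℕ) (i : Fin n) :
    (fun j => (gmPow n lam p Amu Anu (m + 2)).2 i j ^ p) = fun j =>
      ⨅ t, (lam • (fun t => (gmPow n lam p Amu Anu (m + 1)).2 i t ^ p) +
        fun t => (1 - lam) * Anu t j ^ p) t := by
  have : Nonempty (Fin n) := ⟨i⟩
  funext j
  exact rpow_ciInf_rpow_one_div
    (fun t => weighted_rpow_add_nonneg hlam (gmPow_nonneg hA hlam (m + 1) i t).2 (hA t j).2.1) hp

theorem dist_gmPow_fst_rpow_succ_succ_le (hA : IsIFM n Amu Anu)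
    (hlam : lam ∈ Set.Icc (0 : ℝ) 1) (hp : 0 < p) (r s : Fin n) (m : ℕ) :
    dist (fun j => (gmPow n lam p Amu Anu (m + 2)).1 r j ^ p)
        (fun j => (gmPow n lam p Amu Anu (m + 2)).1 s j ^ p) ≤
      lam * dist (fun t => (gmPow n lam p Amu Anu (m + 1)).1 r t ^ p)
        (fun t => (gmPow n lam p Amu Anu (m + 1)).1 s t ^ p) := by
  have : Nonempty (Fin n) := ⟨r⟩
  rw [gmPow_fst_rpow_succ_succ hA hlam hp, gmPow_fst_rpow_succ_succ hA hlam hp]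
  refine (dist_lipschitz_smul_add_le (F := fun _ x => ⨆ t, x t)
    (fun _ => lipschitzWith_one_ciSup) lam (fun j t => (1 - lam) * Amu t j ^ p) _ _).trans_eq ?_
  rw [abs_of_nonneg hlam.1]

theorem dist_gmPow_snd_rpow_succ_succ_le (hA : IsIFM n Amu Anu)
    (hlam : lam ∈ Set.Icc (0 : ℝ) 1) (hp : 0 < p) (r s : Fin n) (m : ℕ) :
    dist (fun j => (gmPow n lam p Amu Anu (m + 2)).2 r j ^ p)
        (fun j => (gmPow n lam p Amu Anu (m + 2)).2 s j ^ p) ≤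
      lam * dist (fun t => (gmPow n lam p Amu Anu (m + 1)).2 r t ^ p)
        (fun t => (gmPow n lam p Amu Anu (m + 1)).2 s t ^ p) := by
  have : Nonempty (Fin n) := ⟨r⟩
  rw [gmPow_snd_rpow_succ_succ hA hlam hp, gmPow_snd_rpow_succ_succ hA hlam hp]
  refine (dist_lipschitz_smul_add_le (F := fun _ x => ⨅ t, x t)
    (fun _ => lipschitzWith_one_ciInf) lam (fun j t => (1 - lam) * Anu t j ^ p) _ _).trans_eq ?_
  rw [abs_of_nonneg hlam.1]

theorem tendsto_dist_gmPow_fst_rpow (hA : IsIFM n Amu Anu) (hlam : lam ∈ Set.Ico (0 : ℝ) 1)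
    (hp : 0 < p) (r s j : Fin n) :
    Tendsto (fun m => dist ((gmPow n lam p Amu Anu m).1 r j ^ p)
      ((gmPow n lam p Amu Anu m).1 s j ^ p)) atTop (𝓝 0) :=
  (tendsto_add_atTop_iff_nat 1).1 <| tendsto_dist_apply_of_dist_succ_le
    (x := fun m t => (gmPow n lam p Amu Anu (m + 1)).1 r t ^ p)
    (y := fun m t => (gmPow n lam p Amu Anu (m + 1)).1 s t ^ p)
    hlam.1 hlam.2 (dist_gmPow_fst_rpow_succ_succ_le hA (Set.Ico_subset_Icc_self hlam) hp r s) j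

theorem tendsto_dist_gmPow_snd_rpow (hA : IsIFM n Amu Anu) (hlam : lam ∈ Set.Ico (0 : ℝ) 1)
    (hp : 0 < p) (r s j : Fin n) :
    Tendsto (fun m => dist ((gmPow n lam p Amu Anu m).2 r j ^ p)
      ((gmPow n lam p Amu Anu m).2 s j ^ p)) atTop (𝓝 0) :=
  (tendsto_add_atTop_iff_nat 1).1 <| tendsto_dist_apply_of_dist_succ_le
    (x := fun m t => (gmPow n lam p Amu Anu (m + 1)).2 r t ^ p)
    (y := fun m t => (gmPow n lam p Amu Anu (m + 1)).2 s t ^ p)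
    hlam.1 hlam.2 (dist_gmPow_snd_rpow_succ_succ_le hA (Set.Ico_subset_Icc_self hlam) hp r s) j

end IFM

theorem gmPow_limit_columns_identical_general (n : ℕ)
    (Amu Anu : Fin n → Fin n → ℝ) (hA : IsIFM n Amu Anu)
    (lam p : ℝ) (hlam : lam ∈ Set.Ico (0 : ℝ) 1) (hp : 0 < p)
    (r s j : Fin n) (Lr Ls Mr Ms : ℝ)
    (hLr : Tendsto (fun m => (gmPow n lam p Amu Anu m).1 r j) atTop (𝓝 Lr))
    (hLs : Tendsto (fun m => (gmPow n lam p Amu Anu m).1 s j) atTop (𝓝 Ls))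
    (hMr : Tendsto (fun m => (gmPow n lam p Amu Anu m).2 r j) atTop (𝓝 Mr))
    (hMs : Tendsto (fun m => (gmPow n lam p Amu Anu m).2 s j) atTop (𝓝 Ms)) :
    Lr = Ls ∧ Mr = Ms := by
  have hnonneg := gmPow_nonneg (p := p) hA (Set.Ico_subset_Icc_self hlam)
  exact ⟨eq_of_tendsto_dist_rpow hp (fun m => (hnonneg m r j).1) (fun m => (hnonneg m s j).1)
      hLr hLs (tendsto_dist_gmPow_fst_rpow hA hlam hp r s j),
    eq_of_tendsto_dist_rpow hp (fun m => (hnonneg m r j).2) (fun m => (hnonneg m s j).2)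
      hMr hMs (tendsto_dist_gmPow_snd_rpow hA hlam hp r s j)⟩

/-- Theorem 3.2 (second part): in the limit of the maxgeneralized
mean–mingeneralized mean powers, all entries of each column coincide. -/
theorem gmPow_limit_columns_identical (n : ℕ) (hn : 1 ≤ n)
    (Amu Anu : Fin n → Fin n → ℝ) (hA : IsIFM n Amu Anu)
    (lam p : ℝ) (hlam : lam ∈ Set.Ico (0 : ℝ) 1) (hp : 0 < p)
    (r s j : Fin n) (Lr Ls Mr Ms : ℝ)
    (hLr : Tendsto (fun m => (gmPow n lam p Amu Anu m).1 r j) atTop (𝓝 Lr))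
    (hLs : Tendsto (fun m => (gmPow n lam p Amu Anu m).1 s j) atTop (𝓝 Ls))
    (hMr : Tendsto (fun m => (gmPow n lam p Amu Anu m).2 r j) atTop (𝓝 Mr))
    (hMs : Tendsto (fun m => (gmPow n lam p Amu Anu m).2 s j) atTop (𝓝 Ms)) :
    Lr = Ls ∧ Mr = Ms :=
  gmPow_limit_columns_identical_general n Amu Anu hA lam p hlam hp r s j Lr Ls Mr Ms hLr hLs hMr hMs
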